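/- (Main theorem) Let n ≥ 2 be a natural number, N = n(n+1)/2, and let m, w be natural numbers with m + w ≤ √n. Let λ be a real number with 0 < λ < 1 and λn ≥ 1, and k = ⌈λn⌉. Then the probability q = ∏_{i=0}^{k-1} (1 - w/(N - m - i)) satisfies q > 1 - 4λ√n/(n - 1). -/
import Mathlib
set_option maxHeartbeats 1000000

lemma weierstrass_one_sub (k : ℕ) (x : ℕ → ℝ) (h0 : ∀ i < k, 0 ≤ x i)
    (h1 : ∀ i < k, x i ≤ 1) :
    1 - ∑ i ∈ Finset.range k, x i ≤ ∏ i ∈ Finset.range k, (1 - x i) := by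
  induction k with
  | zero => simp
  | succ k ih =>
    have h0' : ∀ i < k, 0 ≤ x i := fun i hi => h0 i (hi.trans k.lt_succ_self)
    have h1' : ∀ i < k, x i ≤ 1 := fun i hi => h1 i (hi.trans k.lt_succ_self)
    have ihk := ih h0' h1'
    have hs : 0 ≤ ∑ i ∈ Finset.range k, x i :=
      Finset.sum_nonneg fun i hi => h0' i (Finset.mem_range.mp hi)
    have hxk0 : 0 ≤ x k := h0 k k.lt_succ_self
    have hxk1 : x k ≤ 1 := h1 k k.lt_succ_self
    rw [Finset.prod_range_succ, Finset.sum_range_succ]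
    calc 1 - (∑ i ∈ Finset.range k, x i + x k)
        ≤ (1 - ∑ i ∈ Finset.range k, x i) * (1 - x k) := by nlinarith
      _ ≤ (∏ i ∈ Finset.range k, (1 - x i)) * (1 - x k) :=
          mul_le_mul_of_nonneg_right ihk (by linarith)

lemma zero_missampling_aux (n : ℕ) (hn : 2 ≤ n) (m w : ℕ)
    (hmw : (m : ℝ) + w ≤ Real.sqrt n) (lam : ℝ) (hl0 : 0 < lam) (hl1 : lam < 1)
    (hln : 1 ≤ lam * (n : ℝ)) (k : ℕ)
    (hkn : k ≤ n) (hk_lt : (k : ℝ) < lam * (n : ℝ) + 1) :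
    ∏ i ∈ Finset.range k, (1 - (w : ℝ) / ((n : ℝ) * (n + 1) / 2 - m - i)) >
      1 - 4 * lam * Real.sqrt n / ((n : ℝ) - 1) := by
  set s : ℝ := Real.sqrt n with hs
  have hn2 : (2 : ℝ) ≤ (n : ℝ) := by exact_mod_cast hn
  have hn1 : (1 : ℝ) < (n : ℝ) := by linarith
  have hs2 : s ^ 2 = (n : ℝ) := Real.sq_sqrt (by positivity)
  have hs1 : 1 < s := by nlinarith [Real.sqrt_nonneg (n : ℝ)]
  have hspos : 0 < s := by linarith
  have hrhs_pos : 0 < 4 * lam * s / ((n : ℝ) - 1) :=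
    div_pos (by positivity) (by linarith)
  rcases Nat.eq_zero_or_pos w with hw0 | hw1
  · subst hw0
    simp only [Nat.cast_zero, zero_div, sub_zero, Finset.prod_const_one]
    linarith
  have hw1' : (1 : ℝ) ≤ (w : ℝ) := by exact_mod_cast hw1
  have hm0 : (0 : ℝ) ≤ (m : ℝ) := Nat.cast_nonneg m
  have hw0' : (0 : ℝ) ≤ (w : ℝ) := Nat.cast_nonneg w
  have hk2 : (k : ℝ) ≤ 2 * (lam * n) := by linarith
  set N : ℝ := (n : ℝ) * (n + 1) / 2 with hN
  set D : ℝ := N - m - lam * n with hD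
  have hmns : (m : ℝ) ≤ s - 1 := by linarith
  have hnn1 : (n : ℝ) - 1 ≤ (n : ℝ) * ((n : ℝ) - 1) / 2 := by nlinarith
  have hDpos : 0 < D := by
    have h1 : lam * n < n := by nlinarith
    rw [hD, hN]; nlinarith
  have hden : ∀ i < k, D ≤ N - m - i ∧ (w : ℝ) ≤ N - m - i := by
    intro i hi
    have hik : (i : ℝ) ≤ (k : ℝ) - 1 := by
      have h' : i + 1 ≤ k := hi
      have h'' : ((i : ℝ)) + 1 ≤ (k : ℝ) := by exact_mod_cast h'
      linarith
    have hilam : (i : ℝ) ≤ lam * n := by linarith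
    have hin : (i : ℝ) ≤ (n : ℝ) - 1 := by
      have h' : i + 1 ≤ n := lt_of_lt_of_le hi hkn
      have h'' : ((i : ℝ)) + 1 ≤ (n : ℝ) := by exact_mod_cast h'
      linarith
    refine ⟨by rw [hD]; linarith, ?_⟩
    have hsn' : s < (n : ℝ) := by nlinarith
    have hsN : s + (n : ℝ) - 1 ≤ N := by rw [hN]; nlinarith
    linarith
  have hW := weierstrass_one_sub k (fun i => (w : ℝ) / (N - m - i))
    (fun i hi => div_nonneg hw0' (le_of_lt (lt_of_lt_of_le hDpos (hden i hi).1)))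
    (fun i hi => by
      have h := hden i hi
      rw [div_le_one (lt_of_lt_of_le hDpos h.1)]
      exact h.2)
  have hsum : ∑ i ∈ Finset.range k, (w : ℝ) / (N - m - i) ≤ k * ((w : ℝ) / D) := by
    calc ∑ i ∈ Finset.range k, (w : ℝ) / (N - m - i)
        ≤ ∑ i ∈ Finset.range k, (w : ℝ) / D := by
          apply Finset.sum_le_sum
          intro i hi
          exact div_le_div_of_nonneg_left hw0' hDpos (hden i (Finset.mem_range.mp hi)).1
      _ = k * ((w : ℝ) / D) := by rw [Finset.sum_const, Finset.card_range]; simp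
  have hmain : (k : ℝ) * ((w : ℝ) / D) < 4 * lam * s / ((n : ℝ) - 1) := by
    rw [mul_div_assoc'] at *
    rw [div_lt_div_iff₀ hDpos (by linarith : (0:ℝ) < (n : ℝ) - 1)]
    -- need: k * w * (n - 1) < 4 * lam * s * D
    have hwm : (w : ℝ) ≤ s - m := by linarith
    have hkw : (k : ℝ) * w ≤ 2 * (lam * n) * (s - m) := by nlinarith
    have hmterm : 0 ≤ (m : ℝ) * ((n : ℝ) * ((n:ℝ) - 1) - 2 * s) := by
      rcases Nat.eq_zero_or_pos m with hm | hm
      · simp [hm]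
      · have hm1 : (1 : ℝ) ≤ (m : ℝ) := by exact_mod_cast hm
        have h2s : (2 : ℝ) ≤ s := by linarith
        have hn4 : (4 : ℝ) ≤ (n : ℝ) := by nlinarith
        apply mul_nonneg hm0
        nlinarith
    have hbr : 0 < 2 * (n:ℝ) * s * (1 - lam) + (m:ℝ) * ((n:ℝ) * ((n:ℝ) - 1) - 2 * s) := by
      have h1 : 0 < 2 * (n:ℝ) * s * (1 - lam) := by
        apply mul_pos (mul_pos (by linarith) hspos); linarith
      linarith
    have hkey : 2 * (lam * (n:ℝ)) * (s - (m:ℝ)) * ((n:ℝ) - 1) <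
        4 * lam * s * ((n:ℝ) * ((n:ℝ) + 1) / 2 - (m:ℝ) - lam * (n:ℝ)) := by
      nlinarith [mul_pos hl0 hbr]
    have hstep : (k:ℝ) * (w:ℝ) * ((n:ℝ) - 1) ≤ 2 * (lam * (n:ℝ)) * (s - (m:ℝ)) * ((n:ℝ) - 1) :=
      mul_le_mul_of_nonneg_right hkw (by linarith)
    rw [hD, hN]
    linarith
  calc (1 : ℝ) - 4 * lam * s / ((n : ℝ) - 1)
      < 1 - (k : ℝ) * ((w : ℝ) / D) := by linarith
    _ ≤ 1 - ∑ i ∈ Finset.range k, (w : ℝ) / (N - m - i) := by linarith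
    _ ≤ ∏ i ∈ Finset.range k, (1 - (w : ℝ) / (N - m - i)) := hW

theorem zero_missampling_prob_lower_bound (n : ℕ) (hn : 2 ≤ n) (m w : ℕ)
    (hmw : (m : ℝ) + w ≤ Real.sqrt n) (lam : ℝ) (hl0 : 0 < lam) (hl1 : lam < 1)
    (hln : 1 ≤ lam * (n : ℝ))
    (hpos : ∀ i < ⌈lam * (n : ℝ)⌉₊, 0 < (n : ℝ) * (n + 1) / 2 - m - i) :
    ∏ i ∈ Finset.range ⌈lam * (n : ℝ)⌉₊, (1 - (w : ℝ) / ((n : ℝ) * (n + 1) / 2 - m - i)) >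
      1 - 4 * lam * Real.sqrt n / ((n : ℝ) - 1) := by
  have hnpos : (0 : ℝ) < (n : ℝ) := by
    have : (2:ℝ) ≤ (n:ℝ) := by exact_mod_cast hn
    linarith
  refine zero_missampling_aux n hn m w hmw lam hl0 hl1 hln _ ?_ ?_
  · exact Nat.ceil_le.mpr (by nlinarith)
  · exact Nat.ceil_lt_add_one (by positivity)
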